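/- Let P be a nonempty finite poset with c elements, 𝒜 its collection of antichains (including ∅), and r the maximum size of an antichain. Then |𝒜| = 2^r·μ(r, c) if and only if r = 1 or r = c. -/

import Mathlib

/-!
By Dilworth's theorem `P` is covered by `r` chains `C₁, …, C_r`. An antichain meets each chain in
at most one element, so `|𝒜| ≤ ∏ (|Cᵢ| + 1) ≤ ((c + r) / r) ^ r` by AM–GM. On the other hand
`2 ^ r μ(r, c) = ∏_{i=1}^{r} 2 (c + i) / (r + i)`, and `2 (c + i) / (r + i) ≥ (c + r) / r` because
`(r - i) (c - r) ≥ 0`, strictly for `i = 1` when `2 ≤ r < c`. Conversely, for `r = 1` the antichains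
are `∅` and the singletons, and for `r = c` every subset is an antichain.
-/

/-- `mu r c = ((2r+1)(2r+2)⋯(c+r)) / ((r+1)(r+2)⋯c)` if `r < c`, and `1` otherwise. -/
def mu (ρ γ : ℕ) : ℚ :=
  if ρ < γ then ((γ + ρ).factorial * ρ.factorial : ℚ) / ((2 * ρ).factorial * γ.factorial)
  else 1

open Finset

theorem prod_mul_card_pow_le_sum_pow {ι : Type*} (s : Finset ι) (g : ι → ℕ) :
    (∏ i ∈ s, g i) * #s ^ #s ≤ (∑ i ∈ s, g i) ^ #s := by
  rcases s.eq_empty_or_nonempty with rfl | hs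
  · simp
  have hcard : (0 : ℝ) < #s := by exact_mod_cast hs.card_pos
  have amgm := Real.geom_mean_le_arith_mean s 1 (fun i ↦ (g i : ℝ)) (fun _ _ ↦ zero_le_one)
    (by simpa using hcard) (fun _ _ ↦ Nat.cast_nonneg _)
  simp only [Pi.one_apply, Real.rpow_one, one_mul, sum_const, nsmul_eq_mul, mul_one] at amgm
  have := pow_le_pow_left₀ (by positivity) amgm #s
  rw [Real.rpow_inv_natCast_pow (by positivity) hs.card_pos.ne', div_pow,
    le_div_iff₀ (by positivity)] at this
  exact_mod_cast this

theorem card_powerset_filter_card_le_one {α : Type*} [DecidableEq α] (s : Finset α) :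
    #{t ∈ s.powerset | #t ≤ 1} = #s + 1 := by
  have : {t ∈ s.powerset | #t ≤ 1} = s.powersetCard 1 ∪ s.powersetCard 0 := by
    ext t
    simp only [mem_filter, mem_powerset, mem_union, mem_powersetCard,
      Nat.le_one_iff_eq_zero_or_eq_one]
    tauto
  rw [this, card_union_of_disjoint, card_powersetCard, card_powersetCard]
  · simp
  · exact disjoint_left.2 fun t h1 h0 ↦ by simp_all [mem_powersetCard]

theorem mu_eq_prod {r c : ℕ} (h : r < c) :
    mu r c = ∏ i ∈ range r, ((c + 1 + i : ℚ) / (r + 1 + i)) := by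
  have asc (n : ℕ) : ((n + r).factorial : ℚ) = n.factorial * ∏ i ∈ range r, ((n + 1 + i : ℚ)) := by
    rw [← Nat.factorial_mul_ascFactorial, Nat.ascFactorial_eq_prod_range]; push_cast; rfl
  rw [mu, if_pos h, two_mul, asc, asc, prod_div_distrib]
  field_simp

theorem mu_of_le {r c : ℕ} (h : c ≤ r) : mu r c = 1 := if_neg h.not_gt

theorem two_mul_mu_one {c : ℕ} (hc : 1 ≤ c) : 2 * mu 1 c = c + 1 := by
  rcases hc.eq_or_lt with rfl | hc
  · norm_num [mu_of_le]
  · rw [mu_eq_prod hc, prod_range_one]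
    field_simp
    ring

theorem div_pow_lt_two_pow_mul_mu {r c : ℕ} (hr : 2 ≤ r) (hrc : r < c) :
    ((c + r : ℚ) / r) ^ r < 2 ^ r * mu r c := by
  have two_pow : (2 : ℚ) ^ r = 2 ^ #(range r) := by rw [card_range]
  rw [mu_eq_prod hrc, pow_eq_prod_const (((c : ℚ) + r) / r), two_pow, pow_card_mul_prod]
  have hc : (r : ℚ) < c := by exact_mod_cast hrc
  have hr' : (2 : ℚ) ≤ r := by exact_mod_cast hr
  apply prod_lt_prod (fun _ _ ↦ by positivity)
  · intro i hi
    have hi : (i : ℚ) + 1 ≤ r := by exact_mod_cast mem_range.1 hi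
    rw [mul_div_assoc', div_le_div_iff₀ (by positivity) (by positivity)]
    nlinarith
  · refine ⟨0, mem_range.2 (by omega), ?_⟩
    rw [mul_div_assoc', div_lt_div_iff₀ (by positivity) (by positivity)]
    push_cast
    nlinarith [mul_pos (by linarith : (0 : ℚ) < r - 1) (by linarith : (0 : ℚ) < c - r)]

variable {P : Type*}

/-- Colours are natural numbers below `r` rather than elements of `Fin r`, so that `S = ∅` has a
colouring with `r = 0` colours even when `P` is nonempty. -/
def IsChainColoring [LE P] (S : Finset P) (r : ℕ) (f : P → ℕ) : Prop :=
  (∀ y ∈ S, f y < r) ∧ ∀ y ∈ S, ∀ z ∈ S, f y = f z → y ≤ z ∨ z ≤ y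

namespace IsChainColoring

section LE

variable [LE P] {S A : Finset P} {r : ℕ} {f : P → ℕ}

theorem injOn_of_isAntichain (hf : IsChainColoring S r f) (hA : IsAntichain (· ≤ ·) (A : Set P))
    (hAS : A ⊆ S) : Set.InjOn f A := by
  intro x hx y hy hxy
  rcases hf.2 x (hAS hx) y (hAS hy) hxy with h | h
  exacts [hA.eq hx hy h, hA.eq' hx hy h]

theorem exists_mem_antichain_eq (hf : IsChainColoring S r f)
    (hA : IsAntichain (· ≤ ·) (A : Set P)) (hAS : A ⊆ S) (hcard : #A = r) {i : ℕ} (hi : i < r) :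
    ∃ x ∈ A, f x = i := by
  classical
  have himage : A.image f = range r := by
    refine eq_of_subset_of_card_le (fun j hj ↦ ?_) ?_
    · obtain ⟨x, hx, rfl⟩ := mem_image.1 hj
      exact mem_range.2 (hf.1 x (hAS hx))
    · rw [card_image_of_injOn (hf.injOn_of_isAntichain hA hAS), hcard, card_range]
  simpa using himage.ge (mem_range.2 hi)

theorem card_antichains_le_prod [Fintype P] (hf : IsChainColoring univ r f) :
    Nat.card {A : Finset P // IsAntichain (· ≤ ·) (A : Set P)} ≤
      ∏ i ∈ range r, (#{y | f y = i} + 1) := by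
  classical
  calc Nat.card {A : Finset P // IsAntichain (· ≤ ·) (A : Set P)}
      = #{A : Finset P | IsAntichain (· ≤ ·) (A : Set P)} := by
        rw [Nat.card_eq_fintype_card, Fintype.card_subtype]
    _ ≤ #(Fintype.piFinset fun i : Fin r ↦ {T ∈ ({y | f y = i} : Finset P).powerset | #T ≤ 1}) := by
        refine card_le_card_of_injOn (fun A i ↦ {y ∈ A | f y = i}) (fun A hA ↦ ?_) ?_
        · refine Fintype.mem_piFinset.2 fun i ↦ ?_
          have hinj := hf.injOn_of_isAntichain (mem_filter.1 hA).2 (subset_univ A)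
          refine mem_filter.2 ⟨mem_powerset.2 (filter_subset_filter _ (subset_univ A)), ?_⟩
          refine card_le_one.2 fun y hy z hz ↦ ?_
          rw [mem_filter] at hy hz
          exact hinj hy.1 hz.1 (hy.2.trans hz.2.symm)
        · intro A _ B _ h
          ext y
          simpa using Finset.ext_iff.1 (congrFun h ⟨f y, hf.1 y (mem_univ y)⟩) y
    _ = ∏ i ∈ range r, (#{y | f y = i} + 1) := by
        rw [Fintype.card_piFinset, ← Fin.prod_univ_eq_prod_range]
        simp only [card_powerset_filter_card_le_one]

end LE

variable [PartialOrder P] {S A : Finset P} {r : ℕ} {f : P → ℕ}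

theorem insert_insert [DecidableEq P] (hf : IsChainColoring S r f) {a b : P} (hba : b ≤ a) :
    IsChainColoring (insert a (insert b S)) (r + 1) (fun y ↦ if y = a ∨ y = b then r else f y) := by
  refine ⟨fun y hy ↦ ?_, fun y hy z hz h ↦ ?_⟩
  · dsimp only
    split_ifs with hab
    · exact r.lt_succ_self
    · simp only [mem_insert] at hy
      exact (hf.1 y (by tauto)).trans r.lt_succ_self
  · simp only [mem_insert] at hy hz
    dsimp only at h
    split_ifs at h with hy' hz' hz'
    · rcases hy' with rfl | rfl <;> rcases hz' with rfl | rfl <;> simp [hba]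
    · exact absurd h.symm (hf.1 z (by tauto)).ne
    · exact absurd h (hf.1 y (by tauto)).ne
    · exact hf.2 y (by tauto) z (by tauto) h

open Classical in
/-- The `fU`-chain through `x ∈ A` lies above `x` and is recoloured with `fD x`, so that it
continues the `fD`-chain through `x`, which lies below `x`. -/
theorem exists_of_above_of_below (hA : IsAntichain (· ≤ ·) (A : Set P)) (hAS : A ⊆ S)
    (hcard : #A = r) (hcover : ∀ y ∈ S, ∃ x ∈ A, x ≤ y ∨ y ≤ x) {fU fD : P → ℕ}
    (hU : IsChainColoring {y ∈ S | ∃ x ∈ A, x ≤ y} r fU)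
    (hD : IsChainColoring {y ∈ S | ∃ x ∈ A, y ≤ x} r fD) :
    ∃ f, IsChainColoring S r f := by
  set U := {y ∈ S | ∃ x ∈ A, x ≤ y}
  set D := {y ∈ S | ∃ x ∈ A, y ≤ x}
  have hAU : A ⊆ U := fun x hx ↦ mem_filter.2 ⟨hAS hx, x, hx, le_rfl⟩
  have hAD : A ⊆ D := fun x hx ↦ mem_filter.2 ⟨hAS hx, x, hx, le_rfl⟩
  have mem_D_of_notMem_U : ∀ y ∈ S, y ∉ U → y ∈ D := fun y hy hyU ↦ by
    obtain ⟨x, hx, hxy | hyx⟩ := hcover y hy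
    exacts [absurd (mem_filter.2 ⟨hy, x, hx, hxy⟩) hyU, mem_filter.2 ⟨hy, x, hx, hyx⟩]
  choose σ hσA hσ using fun y (hy : y ∈ U) ↦
    hU.exists_mem_antichain_eq hA hAU hcard (hU.1 y hy)
  have hσ_le : ∀ y (hy : y ∈ U), σ y hy ≤ y := fun y hy ↦ by
    obtain ⟨x, hx, hxy⟩ := (mem_filter.1 hy).2
    refine (hU.2 _ (hAU (hσA y hy)) y hy (hσ y hy)).elim id fun hyσ ↦ ?_
    rwa [hA.eq hx (hσA y hy) (hxy.trans hyσ)] at hxy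
  have below : ∀ y (hy : y ∈ U), ∀ z ∈ S, z ∉ U → fD (σ y hy) = fD z → z ≤ y :=
    fun y hy z hz hzU h ↦ by
      refine (hD.2 _ (hAD (hσA y hy)) z (mem_D_of_notMem_U z hz hzU) h).elim (fun hσz ↦ ?_)
        (·.trans (hσ_le y hy))
      exact absurd (mem_filter.2 ⟨hz, σ y hy, hσA y hy, hσz⟩) hzU
  refine ⟨fun y ↦ if hy : y ∈ U then fD (σ y hy) else fD y, fun y hy ↦ ?_, fun y hy z hz h ↦ ?_⟩
  · dsimp only
    split_ifs with hyU
    exacts [hD.1 _ (hAD (hσA y hyU)), hD.1 y (mem_D_of_notMem_U y hy hyU)]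
  · dsimp only at h
    split_ifs at h with hyU hzU hzU
    · have := hD.injOn_of_isAntichain hA hAD (hσA y hyU) (hσA z hzU) h
      exact hU.2 y hyU z hzU (by rw [← hσ y hyU, ← hσ z hzU, this])
    · exact Or.inr (below y hyU z hz hzU h)
    · exact Or.inl (below z hzU y hy hyU h.symm)
    · exact hD.2 y (mem_D_of_notMem_U y hy hyU) z (mem_D_of_notMem_U z hz hzU) h

end IsChainColoring

theorem IsAntichain.exists_le_or_le_of_card_max [PartialOrder P] {S A : Finset P}
    (hA : IsAntichain (· ≤ ·) (A : Set P)) (hAS : A ⊆ S)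
    (hmax : ∀ B ⊆ S, IsAntichain (· ≤ ·) (B : Set P) → #B ≤ #A) {y : P} (hy : y ∈ S) :
    ∃ x ∈ A, x ≤ y ∨ y ≤ x := by
  classical
  by_contra! h
  have hyA : y ∉ A := fun hyA ↦ (h y hyA).1 le_rfl
  have hins : IsAntichain (· ≤ ·) ((insert y A : Finset P) : Set P) := by
    rw [coe_insert]
    exact hA.insert (fun x hx _ ↦ (h x hx).1) (fun x hx _ ↦ (h x hx).2)
  have := hmax _ (insert_subset hy hAS) hins
  rw [card_insert_of_notMem hyA] at this
  omega

/-- Dilworth's theorem, by Perles' argument: for `a` maximal and `b ≤ a` minimal in `S`, either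
`S \ {a, b}` has width `< r` and `{a, b}` is one more chain, or a maximum antichain `A` of
`S \ {a, b}` splits `S` into the proper subsets above and below `A`. -/
theorem exists_isChainColoring [PartialOrder P] (S : Finset P) (r : ℕ)
    (hS : ∀ A ⊆ S, IsAntichain (· ≤ ·) (A : Set P) → #A ≤ r) :
    ∃ f, IsChainColoring S r f := by
  classical
  induction S using Finset.strongInduction generalizing r with
  | H S ih =>
  rcases S.eq_empty_or_nonempty with rfl | hne
  · exact ⟨0, by simp [IsChainColoring]⟩
  obtain ⟨a, ha⟩ := S.exists_maximal hne
  obtain ⟨b, hb⟩ := {y ∈ S | y ≤ a}.exists_minimal ⟨a, mem_filter.2 ⟨ha.1, le_rfl⟩⟩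
  obtain ⟨hbS, hba⟩ := mem_filter.1 hb.1
  have hb_min : ∀ x ∈ S, x ≤ b → x = b := fun x hx hxb ↦
    hb.eq_of_le (mem_filter.2 ⟨hx, hxb.trans hba⟩) hxb
  set T := (S.erase a).erase b
  have hTS : T ⊂ S :=
    (ssubset_iff_of_subset ((erase_subset _ _).trans (erase_subset _ _))).2 ⟨a, ha.1, by simp⟩
  by_cases hT : ∀ A ⊆ T, IsAntichain (· ≤ ·) (A : Set P) → #A ≤ r - 1
  · obtain ⟨f, hf⟩ := ih T hTS (r - 1) hT
    have hr : 1 ≤ r := by simpa using hS {a} (by simpa using ha.1) (by simp)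
    have hST : insert a (insert b T) = S := by
      ext y
      by_cases hya : y = a <;> by_cases hyb : y = b <;> simp [T, hya, hyb, ha.1, hbS]
    rw [← hST, ← Nat.sub_add_cancel hr]
    exact ⟨_, hf.insert_insert hba⟩
  push Not at hT
  obtain ⟨A, hAT, hA, hAr⟩ := hT
  have hAS : A ⊆ S := hAT.trans hTS.subset
  have hcard : #A = r := by have := hS A hAS hA; omega
  have hbU : b ∉ {y ∈ S | ∃ x ∈ A, x ≤ y} := fun h ↦ by
    obtain ⟨x, hx, hxb⟩ := (mem_filter.1 h).2
    exact (mem_erase.1 (hAT (hb_min x (hAS hx) hxb ▸ hx))).1 rfl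
  have haD : a ∉ {y ∈ S | ∃ x ∈ A, y ≤ x} := fun h ↦ by
    obtain ⟨x, hx, hax⟩ := (mem_filter.1 h).2
    exact (mem_erase.1 (mem_erase.1 (hAT (ha.eq_of_le (hAS hx) hax ▸ hx))).2).1 rfl
  obtain ⟨fU, hU⟩ := ih _ ((ssubset_iff_of_subset (filter_subset _ _)).2 ⟨b, hbS, hbU⟩) r
    fun B hB ↦ hS B (hB.trans (filter_subset _ _))
  obtain ⟨fD, hD⟩ := ih _ ((ssubset_iff_of_subset (filter_subset _ _)).2 ⟨a, ha.1, haD⟩) r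
    fun B hB ↦ hS B (hB.trans (filter_subset _ _))
  exact IsChainColoring.exists_of_above_of_below hA hAS hcard
    (fun y hy ↦ hA.exists_le_or_le_of_card_max hAS (hcard ▸ hS) hy) hU hD

variable [PartialOrder P] [Fintype P]

theorem card_antichains_lt {r : ℕ} (hr : 2 ≤ r) (hrc : r < Fintype.card P)
    (hw : ∀ A : Finset P, IsAntichain (· ≤ ·) (A : Set P) → #A ≤ r) :
    (Nat.card {A : Finset P // IsAntichain (· ≤ ·) (A : Set P)} : ℚ) <
      2 ^ r * mu r (Fintype.card P) := by
  obtain ⟨f, hf⟩ := exists_isChainColoring univ r fun A _ ↦ hw A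
  have hsum : ∑ i ∈ range r, (#{y | f y = i} + 1) = Fintype.card P + r := by
    rw [sum_add_distrib, ← card_eq_sum_card_fiberwise fun y _ ↦ mem_range.2 (hf.1 y (mem_univ y))]
    simp
  have amgm := prod_mul_card_pow_le_sum_pow (range r) fun i ↦ #{y | f y = i} + 1
  rw [hsum, card_range] at amgm
  calc (Nat.card {A : Finset P // IsAntichain (· ≤ ·) (A : Set P)} : ℚ)
      ≤ ∏ i ∈ range r, (#{y | f y = i} + 1 : ℚ) := by exact_mod_cast hf.card_antichains_le_prod
    _ ≤ ((Fintype.card P + r : ℚ) / r) ^ r := by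
        rw [div_pow, le_div_iff₀ (by positivity)]
        exact_mod_cast amgm
    _ < 2 ^ r * mu r (Fintype.card P) := div_pow_lt_two_pow_mul_mu hr hrc

theorem card_antichains_of_card_le_one
    (h : ∀ A : Finset P, IsAntichain (· ≤ ·) (A : Set P) → #A ≤ 1) :
    Nat.card {A : Finset P // IsAntichain (· ≤ ·) (A : Set P)} = Fintype.card P + 1 := by
  classical
  rw [Nat.card_eq_fintype_card, Fintype.card_subtype, ← card_univ, ← powerset_univ,
    ← card_powerset_filter_card_le_one]
  congr 1
  exact filter_congr fun A _ ↦
    ⟨h A, fun hA ↦ Set.Subsingleton.isAntichain (fun x hx y hy ↦ card_le_one.1 hA x hx y hy) _⟩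

theorem card_antichains_of_isAntichain_univ (h : IsAntichain (· ≤ ·) (Set.univ : Set P)) :
    Nat.card {A : Finset P // IsAntichain (· ≤ ·) (A : Set P)} = 2 ^ Fintype.card P := by
  rw [Nat.card_congr (Equiv.subtypeUnivEquiv fun A ↦ h.subset (Set.subset_univ _)),
    Nat.card_eq_fintype_card, Fintype.card_finset]

theorem card_antichains_eq_iff_general (P : Type) [PartialOrder P] [Fintype P] (r : ℕ)
    (hr_ex : ∃ A : Finset P, IsAntichain (· ≤ ·) (A : Set P) ∧ A.card = r)
    (hr_max : ∀ A : Finset P, IsAntichain (· ≤ ·) (A : Set P) → A.card ≤ r) :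
    (Nat.card {A : Finset P // IsAntichain (· ≤ ·) (A : Set P)} : ℚ) =
      2 ^ r * mu r (Fintype.card P) ↔ (r = 1 ∨ r = Fintype.card P) := by
  obtain ⟨A, hA, hAr⟩ := hr_ex
  have hrc : r ≤ Fintype.card P := hAr ▸ card_le_univ A
  constructor
  · intro heq
    by_contra! hne
    have hr : 1 ≤ r := by
      obtain ⟨p⟩ := Fintype.card_pos_iff (α := P) |>.1 (by omega)
      simpa using hr_max {p} (by simp)
    exact (card_antichains_lt (by omega) (hrc.lt_of_ne hne.2) hr_max).ne heq
  · rintro (rfl | rfl)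
    · rw [card_antichains_of_card_le_one hr_max, pow_one, two_mul_mu_one hrc]
      norm_cast
    · obtain rfl := eq_univ_of_card A hAr
      rw [card_antichains_of_isAntichain_univ (by simpa using hA), mu_of_le le_rfl]
      simp

/-- For a nonempty finite poset `P` with `c` elements and `r` the maximum size of an antichain,
the number of antichains equals `2^r · μ(r, c)` if and only if `r = 1` or `r = c`. -/
theorem card_antichains_eq_iff (P : Type) [PartialOrder P] [Fintype P] [Nonempty P] (r : ℕ)
    (hr_ex : ∃ A : Finset P, IsAntichain (· ≤ ·) (A : Set P) ∧ A.card = r)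
    (hr_max : ∀ A : Finset P, IsAntichain (· ≤ ·) (A : Set P) → A.card ≤ r) :
    (Nat.card {A : Finset P // IsAntichain (· ≤ ·) (A : Set P)} : ℚ) =
      2 ^ r * mu r (Fintype.card P) ↔ (r = 1 ∨ r = Fintype.card P) :=
  card_antichains_eq_iff_general P r hr_ex hr_max
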